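/- arXiv:2101.08594 — 2 statements merged into one kernel-verified Lean document; each statement's English description precedes it below -/
import Mathlib

section
/- Let T>0, β∈(0,2), q>2, and let ψ:[0,T]→[0,∞) be continuous. Suppose there exist constants C₀>0 and C₁,C₂≥0 such that ψ(t) ≤ C₀ + C₁∫₀ᵗ s^{1-β} ψ(s)^{(q-2)/q} ds + C₂∫₀ᵗ s^{-β/2} ψ(s)^{(q-1)/q} ds for all t∈[0,T]. Then ψ(t) ≤ (C₀^{1/q} + (C₀^{-1/q}C₁/(q(2-β))) t^{2-β} + (C₂/(q(1-β/2))) t^{1-β/2})^q for all t∈[0,T]. -/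
open MeasureTheory intervalIntegral

section helpers
open Set

lemma gw_aux_int (T r e : ℝ) (ψ : ℝ → ℝ) (hr : -1 < r) (he : 0 ≤ e)
    (hψc : ContinuousOn ψ (Icc 0 T)) (hψ0 : ∀ t ∈ Icc (0:ℝ) T, 0 ≤ ψ t)
    {t : ℝ} (ht : t ∈ Icc (0:ℝ) T) :
    IntervalIntegrable (fun s => s ^ r * ψ s ^ e) volume 0 t := by
  obtain ⟨M, hM⟩ := isCompact_Icc.exists_bound_of_continuousOn hψc
  have hIoc : uIoc (0:ℝ) t = Ioc 0 t := uIoc_of_le ht.1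
  have hsub : Ioc (0:ℝ) t ⊆ Icc 0 T := fun x hx => ⟨hx.1.le, hx.2.trans ht.2⟩
  have hg : IntervalIntegrable (fun s => s ^ r * M ^ e) volume 0 t :=
    (intervalIntegrable_rpow' hr).mul_const _
  refine hg.mono_fun' ?_ ?_
  · rw [hIoc]
    refine ContinuousOn.aestronglyMeasurable ?_ measurableSet_Ioc
    exact (continuousOn_id.rpow_const fun s hs => Or.inl (ne_of_gt hs.1)).mul
      ((hψc.mono hsub).rpow_const fun s _ => Or.inr he)
  · rw [hIoc]
    filter_upwards [ae_restrict_mem measurableSet_Ioc] with x hx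
    have hx0 : (0:ℝ) ≤ x := hx.1.le
    have hxr : (0:ℝ) ≤ x ^ r := Real.rpow_nonneg hx0 r
    have hψx : 0 ≤ ψ x := hψ0 x (hsub hx)
    have hψM : ψ x ≤ M := (le_abs_self _).trans (hM x (hsub hx))
    have hb : ψ x ^ e ≤ M ^ e := Real.rpow_le_rpow hψx hψM he
    calc ‖x ^ r * ψ x ^ e‖ = x ^ r * ψ x ^ e := by
          rw [Real.norm_eq_abs, abs_of_nonneg (mul_nonneg hxr (Real.rpow_nonneg hψx e))]
      _ ≤ x ^ r * M ^ e := by gcongr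

lemma gw_aux_deriv (T r e : ℝ) (ψ : ℝ → ℝ) (hr : -1 < r) (he : 0 ≤ e)
    (hψc : ContinuousOn ψ (Icc 0 T)) (hψ0 : ∀ t ∈ Icc (0:ℝ) T, 0 ≤ ψ t)
    {t : ℝ} (ht : t ∈ Ioo (0:ℝ) T) :
    HasDerivAt (fun x => ∫ s in (0:ℝ)..x, s ^ r * ψ s ^ e) (t ^ r * ψ t ^ e) t := by
  have hint := gw_aux_int T r e ψ hr he hψc hψ0 (Ioo_subset_Icc_self ht)
  have hmem : Ioo (0:ℝ) T ∈ nhds t := isOpen_Ioo.mem_nhds ht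
  have hcontψ : ContinuousAt ψ t :=
    hψc.continuousAt (Filter.mem_of_superset hmem Ioo_subset_Icc_self)
  have hca : ContinuousAt (fun s => s ^ r * ψ s ^ e) t :=
    ((Real.continuousAt_rpow_const t r (Or.inl (ne_of_gt ht.1)))).mul
      (hcontψ.rpow_const (Or.inr he))
  refine integral_hasDerivAt_right hint ⟨Ioo 0 T, hmem, ?_⟩ hca
  refine ContinuousOn.aestronglyMeasurable ?_ measurableSet_Ioo
  exact (continuousOn_id.rpow_const fun s hs => Or.inl (ne_of_gt hs.1)).mul
    ((hψc.mono Ioo_subset_Icc_self).rpow_const fun s _ => Or.inr he)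

end helpers

/-- Generalized Gronwall lemma with two nonlinear powers and singular weights. -/
theorem gronwall_two_powers
    (T β q C₀ C₁ C₂ : ℝ) (ψ : ℝ → ℝ)
    (hT : 0 < T) (hβ : β ∈ Set.Ioo (0:ℝ) 2) (hq : 2 < q)
    (hψc : ContinuousOn ψ (Set.Icc 0 T))
    (hψ0 : ∀ t ∈ Set.Icc (0:ℝ) T, 0 ≤ ψ t)
    (hC₀ : 0 < C₀) (hC₁ : 0 ≤ C₁) (hC₂ : 0 ≤ C₂)
    (h : ∀ t ∈ Set.Icc (0:ℝ) T,
      ψ t ≤ C₀ + C₁ * (∫ s in (0:ℝ)..t, s ^ (1 - β) * ψ s ^ ((q - 2) / q))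
              + C₂ * (∫ s in (0:ℝ)..t, s ^ (-(β / 2)) * ψ s ^ ((q - 1) / q))) :
    ∀ t ∈ Set.Icc (0:ℝ) T,
      ψ t ≤ (C₀ ^ (1/q) + C₀ ^ (-(1/q)) * C₁ / (q * (2 - β)) * t ^ (2 - β)
              + C₂ / (q * (1 - β / 2)) * t ^ (1 - β / 2)) ^ q := by
  obtain ⟨hβ0, hβ2⟩ := hβ
  have hq0 : (0:ℝ) < q := by linarith
  have hr₁ : (-1:ℝ) < 1 - β := by linarith
  have hr₂ : (-1:ℝ) < -(β/2) := by linarith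
  have he₁ : (0:ℝ) ≤ (q-2)/q := div_nonneg (by linarith) hq0.le
  have he₂ : (0:ℝ) ≤ (q-1)/q := div_nonneg (by linarith) hq0.le
  set F₁ : ℝ → ℝ := fun x => ∫ s in (0:ℝ)..x, s ^ (1-β) * ψ s ^ ((q-2)/q) with hF₁
  set F₂ : ℝ → ℝ := fun x => ∫ s in (0:ℝ)..x, s ^ (-(β/2)) * ψ s ^ ((q-1)/q) with hF₂
  set Φ : ℝ → ℝ := fun x => C₀ + C₁ * F₁ x + C₂ * F₂ x with hΦdef
  have hF₁nn : ∀ t ∈ Set.Icc (0:ℝ) T, 0 ≤ F₁ t := fun t ht =>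
    intervalIntegral.integral_nonneg ht.1 fun u hu =>
      mul_nonneg (Real.rpow_nonneg hu.1 _)
        (Real.rpow_nonneg (hψ0 u ⟨hu.1, hu.2.trans ht.2⟩) _)
  have hF₂nn : ∀ t ∈ Set.Icc (0:ℝ) T, 0 ≤ F₂ t := fun t ht =>
    intervalIntegral.integral_nonneg ht.1 fun u hu =>
      mul_nonneg (Real.rpow_nonneg hu.1 _)
        (Real.rpow_nonneg (hψ0 u ⟨hu.1, hu.2.trans ht.2⟩) _)
  have hΦlb : ∀ t ∈ Set.Icc (0:ℝ) T, C₀ ≤ Φ t := fun t ht => by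
    have h1 := mul_nonneg hC₁ (hF₁nn t ht)
    have h2 := mul_nonneg hC₂ (hF₂nn t ht)
    simp only [hΦdef]; linarith
  have hΦpos : ∀ t ∈ Set.Icc (0:ℝ) T, 0 < Φ t := fun t ht => lt_of_lt_of_le hC₀ (hΦlb t ht)
  have hu : Set.uIcc (0:ℝ) T = Set.Icc 0 T := Set.uIcc_of_le hT.le
  have hTmem : T ∈ Set.Icc (0:ℝ) T := Set.right_mem_Icc.2 hT.le
  have hF₁c : ContinuousOn F₁ (Set.Icc 0 T) := by
    have := intervalIntegral.continuousOn_primitive_interval (a := (0:ℝ)) (b := T)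
      (μ := volume) (f := fun s => s ^ (1-β) * ψ s ^ ((q-2)/q)) ?_
    · rwa [hu] at this
    · rw [hu]
      exact (intervalIntegrable_iff_integrableOn_Icc_of_le hT.le).1
        (gw_aux_int T _ _ ψ hr₁ he₁ hψc hψ0 hTmem)
  have hF₂c : ContinuousOn F₂ (Set.Icc 0 T) := by
    have := intervalIntegral.continuousOn_primitive_interval (a := (0:ℝ)) (b := T)
      (μ := volume) (f := fun s => s ^ (-(β/2)) * ψ s ^ ((q-1)/q)) ?_
    · rwa [hu] at this
    · rw [hu]
      exact (intervalIntegrable_iff_integrableOn_Icc_of_le hT.le).1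
        (gw_aux_int T _ _ ψ hr₂ he₂ hψc hψ0 hTmem)
  have hΦc : ContinuousOn Φ (Set.Icc 0 T) :=
    (continuousOn_const.add (continuousOn_const.mul hF₁c)).add (continuousOn_const.mul hF₂c)
  set B : ℝ → ℝ := fun x => C₀ ^ (1/q) + C₀ ^ (-(1/q)) * C₁ / (q * (2 - β)) * x ^ (2 - β)
              + C₂ / (q * (1 - β / 2)) * x ^ (1 - β / 2) with hBdef
  set H : ℝ → ℝ := fun x => Φ x ^ (1/q) with hHdef
  have hHc : ContinuousOn H (Set.Icc 0 T) :=
    hΦc.rpow_const fun x hx => Or.inl (ne_of_gt (hΦpos x hx))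
  have hBc : ContinuousOn B (Set.Icc 0 T) := by
    refine (continuousOn_const.add (continuousOn_const.mul
      (continuousOn_id.rpow_const fun x _ => Or.inr (by linarith)))).add
      (continuousOn_const.mul (continuousOn_id.rpow_const fun x _ => Or.inr (by linarith)))
  have key : ∀ x ∈ Set.Ioo (0:ℝ) T, ∃ d, HasDerivAt (fun y => B y - H y) d x ∧ 0 ≤ d := by
    intro x hx
    have hxIcc : x ∈ Set.Icc (0:ℝ) T := Set.Ioo_subset_Icc_self hx
    have hd₁ := gw_aux_deriv T (1-β) ((q-2)/q) ψ hr₁ he₁ hψc hψ0 hx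
    have hd₂ := gw_aux_deriv T (-(β/2)) ((q-1)/q) ψ hr₂ he₂ hψc hψ0 hx
    have hΦd : HasDerivAt Φ
        (C₁ * (x^(1-β) * ψ x ^ ((q-2)/q)) + C₂ * (x^(-(β/2)) * ψ x ^ ((q-1)/q))) x := by
      simp only [hΦdef, hF₁, hF₂]
      exact ((hd₁.const_mul C₁).const_add C₀).add (hd₂.const_mul C₂)
    have hΦx : 0 < Φ x := hΦpos x hxIcc
    have hHd : HasDerivAt H
        ((C₁ * (x^(1-β) * ψ x ^ ((q-2)/q)) + C₂ * (x^(-(β/2)) * ψ x ^ ((q-1)/q)))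
          * (1/q) * Φ x ^ (1/q - 1)) x :=
      hΦd.rpow_const (Or.inl (ne_of_gt hΦx))
    have hBd : HasDerivAt B
        (C₀^(-(1/q)) * C₁ / (q*(2-β)) * ((2-β) * x^(1-β))
          + C₂/(q*(1-β/2)) * ((1-β/2) * x^(-(β/2)))) x := by
      have h1 : HasDerivAt (fun u:ℝ => u ^ (2-β)) ((2-β) * x^(2-β-1)) x :=
        Real.hasDerivAt_rpow_const (Or.inl (ne_of_gt hx.1))
      have h2 : HasDerivAt (fun u:ℝ => u ^ (1-β/2)) ((1-β/2) * x^(1-β/2-1)) x :=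
        Real.hasDerivAt_rpow_const (Or.inl (ne_of_gt hx.1))
      have e1 : 2 - β - 1 = 1 - β := by ring
      have e2 : 1 - β/2 - 1 = -(β/2) := by ring
      rw [e1] at h1; rw [e2] at h2
      exact ((h1.const_mul _).const_add _).add (h2.const_mul _)
    refine ⟨_, hBd.sub hHd, ?_⟩
    -- the derivative inequality
    set w₁ := x^(1-β) with hw₁
    set w₂ := x^(-(β/2)) with hw₂
    have hw₁nn : 0 ≤ w₁ := Real.rpow_nonneg hx.1.le _
    have hw₂nn : 0 ≤ w₂ := Real.rpow_nonneg hx.1.le _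
    set u₁ := ψ x ^ ((q-2)/q)
    set u₂ := ψ x ^ ((q-1)/q)
    have hPp : (0:ℝ) ≤ Φ x ^ (1/q - 1) := Real.rpow_nonneg hΦx.le _
    have hψx : 0 ≤ ψ x := hψ0 x hxIcc
    have hψle : ψ x ≤ Φ x := h x hxIcc
    have k1 : u₁ * Φ x ^ (1/q - 1) ≤ C₀ ^ (-(1/q)) := by
      have s1 : u₁ ≤ Φ x ^ ((q-2)/q) := Real.rpow_le_rpow hψx hψle he₁
      have s2 : Φ x ^ ((q-2)/q) * Φ x ^ (1/q - 1) = Φ x ^ (-(1/q)) := by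
        rw [← Real.rpow_add hΦx]
        congr 1
        field_simp
        ring
      calc u₁ * Φ x ^ (1/q - 1) ≤ Φ x ^ ((q-2)/q) * Φ x ^ (1/q - 1) := by gcongr
        _ = Φ x ^ (-(1/q)) := s2
        _ ≤ C₀ ^ (-(1/q)) := Real.rpow_le_rpow_of_nonpos hC₀ (hΦlb x hxIcc)
            (by positivity |> fun h => neg_nonpos.2 h)
    have k2 : u₂ * Φ x ^ (1/q - 1) ≤ 1 := by
      have s1 : u₂ ≤ Φ x ^ ((q-1)/q) := Real.rpow_le_rpow hψx hψle he₂
      have s2 : Φ x ^ ((q-1)/q) * Φ x ^ (1/q - 1) = 1 := by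
        rw [← Real.rpow_add hΦx]
        have : (q-1)/q + (1/q - 1) = 0 := by field_simp; ring
        rw [this, Real.rpow_zero]
      calc u₂ * Φ x ^ (1/q - 1) ≤ Φ x ^ ((q-1)/q) * Φ x ^ (1/q - 1) := by gcongr
        _ = 1 := s2
    rw [sub_nonneg]
    have h2βne : (2:ℝ) - β ≠ 0 := by linarith
    have h1βne : (1:ℝ) - β/2 ≠ 0 := by linarith
    have hqne : q ≠ 0 := ne_of_gt hq0
    have hB1 : C₀^(-(1/q)) * C₁ / (q*(2-β)) * ((2-β)*w₁) = (C₁ * w₁ * C₀^(-(1/q))) * (1/q) := by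
      rw [div_mul_eq_mul_div, div_eq_iff (mul_ne_zero hqne h2βne)]
      field_simp
    have hB2 : C₂/(q*(1-β/2)) * ((1-β/2)*w₂) = (C₂ * w₂) * (1/q) := by
      rw [div_mul_eq_mul_div, div_eq_iff (mul_ne_zero hqne h1βne)]
      field_simp
    rw [hB1, hB2]
    have hLHS : (C₁ * (w₁ * u₁) + C₂ * (w₂ * u₂)) * (1/q) * Φ x ^ (1/q - 1)
        = (C₁ * w₁ * (u₁ * Φ x ^ (1/q - 1)) + C₂ * w₂ * (u₂ * Φ x ^ (1/q - 1))) * (1/q) := by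
      ring
    rw [hLHS]
    have step : C₁ * w₁ * (u₁ * Φ x ^ (1/q - 1)) + C₂ * w₂ * (u₂ * Φ x ^ (1/q - 1))
        ≤ C₁ * w₁ * C₀^(-(1/q)) + C₂ * w₂ := by
      have t1 : C₁ * w₁ * (u₁ * Φ x ^ (1/q - 1)) ≤ C₁ * w₁ * C₀^(-(1/q)) :=
        mul_le_mul_of_nonneg_left k1 (mul_nonneg hC₁ hw₁nn)
      have t2 : C₂ * w₂ * (u₂ * Φ x ^ (1/q - 1)) ≤ C₂ * w₂ * 1 :=
        mul_le_mul_of_nonneg_left k2 (mul_nonneg hC₂ hw₂nn)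
      rw [mul_one] at t2
      linarith
    have := mul_le_mul_of_nonneg_right step (by positivity : (0:ℝ) ≤ 1/q)
    linarith
  have hDc : ContinuousOn (fun y => B y - H y) (Set.Icc 0 T) := hBc.sub hHc
  have hDdiff : DifferentiableOn ℝ (fun y => B y - H y) (interior (Set.Icc (0:ℝ) T)) := by
    rw [interior_Icc]
    intro x hx
    obtain ⟨d, hd, _⟩ := key x hx
    exact hd.differentiableAt.differentiableWithinAt
  have hD' : ∀ x ∈ interior (Set.Icc (0:ℝ) T), 0 ≤ deriv (fun y => B y - H y) x := by
    rw [interior_Icc]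
    intro x hx
    obtain ⟨d, hd, hd0⟩ := key x hx
    rw [hd.deriv]
    exact hd0
  have hmono := monotoneOn_of_deriv_nonneg (convex_Icc 0 T) hDc hDdiff hD'
  intro t ht
  have h0T : (0:ℝ) ∈ Set.Icc (0:ℝ) T := Set.left_mem_Icc.2 hT.le
  have hDt := hmono h0T ht ht.1
  have hD0 : B 0 - H 0 = 0 := by
    have z1 : (0:ℝ) ^ (2-β) = 0 := Real.zero_rpow (by linarith)
    have z2 : (0:ℝ) ^ (1-β/2) = 0 := Real.zero_rpow (by linarith)
    simp only [hBdef, hHdef, hΦdef, hF₁, hF₂, intervalIntegral.integral_same, z1, z2,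
      mul_zero, add_zero]
    ring
  have hDt' : B 0 - H 0 ≤ B t - H t := hDt
  rw [hD0] at hDt'
  have hHB : H t ≤ B t := by linarith [hDt']
  have hH0 : 0 ≤ H t := Real.rpow_nonneg (hΦpos t ht).le _
  have hΦeq : Φ t = H t ^ q := by
    simp only [hHdef]
    rw [← Real.rpow_mul (hΦpos t ht).le]
    rw [one_div_mul_cancel (ne_of_gt hq0), Real.rpow_one]
  have hfin : Φ t ≤ B t ^ q := by
    rw [hΦeq]
    exact Real.rpow_le_rpow hH0 hHB hq0.le
  exact le_trans (h t ht) hfin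
end

section
/- Let u ∈ C¹(ℝᴺ) satisfy |∇u(x)| < 1 for all x (strictly spacelike) and suppose liminf_{|x|→∞} (1-|∇u(x)|²)|x|² > 0. Then for every x₀ ∈ ℝᴺ there exists R > 0 such that the set K_R(x₀) = {x : |x-x₀|² - (u(x)-u(x₀))² < R²} is bounded. -/
lemma norm_gradient_eq_norm_fderiv {N : ℕ} (u : EuclideanSpace ℝ (Fin N) → ℝ) (x : EuclideanSpace ℝ (Fin N)) :
    ‖gradient u x‖ = ‖fderiv ℝ u x‖ := by
  simp [gradient]

/-- If `u` is `C¹`, strictly spacelike, and `liminf (1-|∇u|²)|x|² > 0` at infinity,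
then for every `x₀` there is `R > 0` with `K_R(x₀)` bounded. -/
theorem lorentzBall_bounded_of_liminf
    (N : ℕ) (u : EuclideanSpace ℝ (Fin N) → ℝ)
    (hu : ContDiff ℝ 1 u)
    (hsp : ∀ x, ‖gradient u x‖ < 1)
    (hliminf : ∃ c > (0:ℝ), ∀ᶠ x in Filter.cocompact (EuclideanSpace ℝ (Fin N)),
      c ≤ (1 - ‖gradient u x‖ ^ 2) * ‖x‖ ^ 2) :
    ∀ x₀ : EuclideanSpace ℝ (Fin N), ∃ R > (0:ℝ), Bornology.IsBounded
      {x | dist x x₀ ^ 2 - (u x - u x₀) ^ 2 < R ^ 2} := by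
  intro x₀
  -- continuity of the gradient norm
  have hdiff : Differentiable ℝ u := hu.differentiable one_ne_zero
  have hgradcont : Continuous fun x => ‖gradient u x‖ := by
    have h1 : Continuous fun x => fderiv ℝ u x := hu.continuous_fderiv one_ne_zero
    have : Continuous fun x => ‖fderiv ℝ u x‖ := h1.norm
    simpa [norm_gradient_eq_norm_fderiv] using this
  -- max of gradient norm on the closed unit ball around x₀
  obtain ⟨z, hz, hzmax⟩ := (isCompact_closedBall x₀ 1).exists_isMaxOn
    ⟨x₀, Metric.mem_closedBall_self zero_le_one⟩ hgradcont.continuousOn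
  set m : ℝ := ‖gradient u z‖ with hm
  have hm1 : m < 1 := hsp z
  have hm0 : 0 ≤ m := norm_nonneg _
  set δ : ℝ := 1 - m with hδ
  have hδ0 : 0 < δ := by simp [hδ]; linarith
  have hδ1 : δ ≤ 1 := by simp [hδ]; linarith
  refine ⟨Real.sqrt δ, Real.sqrt_pos.mpr hδ0, ?_⟩
  have hRsq : Real.sqrt δ ^ 2 = δ := Real.sq_sqrt hδ0.le
  have hsub : {x | dist x x₀ ^ 2 - (u x - u x₀) ^ 2 < Real.sqrt δ ^ 2} ⊆
      Metric.closedBall x₀ 1 := by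
    intro x hx
    simp only [Set.mem_setOf_eq, hRsq] at hx
    by_contra hxball
    rw [Metric.mem_closedBall, not_le] at hxball
    set T : ℝ := dist x x₀ with hT
    have hT1 : 1 < T := hxball
    have hT0 : (0:ℝ) < T := by linarith
    -- intermediate point at distance 1
    set y : EuclideanSpace ℝ (Fin N) := x₀ + T⁻¹ • (x - x₀) with hy
    have hyx₀ : ‖y - x₀‖ = 1 := by
      have : y - x₀ = T⁻¹ • (x - x₀) := by rw [hy]; abel
      rw [this, norm_smul, Real.norm_eq_abs, abs_of_pos (inv_pos.mpr hT0),
        ← dist_eq_norm, ← hT]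
      field_simp
    have hymem : y ∈ Metric.closedBall x₀ 1 := by
      rw [Metric.mem_closedBall, dist_eq_norm, hyx₀]
    -- segment estimate on the unit ball with constant m
    have h1 : ‖u y - u x₀‖ ≤ m * ‖y - x₀‖ := by
      apply (convex_closedBall x₀ 1).norm_image_sub_le_of_norm_fderiv_le
        (fun w _ => hdiff w)
        (fun w hw => by
          rw [← norm_gradient_eq_norm_fderiv]; exact hzmax hw)
        (Metric.mem_closedBall_self zero_le_one) hymem
    -- global estimate with constant 1
    have h2 : ‖u x - u y‖ ≤ 1 * ‖x - y‖ := by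
      apply convex_univ.norm_image_sub_le_of_norm_fderiv_le
        (fun w _ => hdiff w)
        (fun w _ => by
          rw [← norm_gradient_eq_norm_fderiv]; exact (hsp w).le)
        (Set.mem_univ y) (Set.mem_univ x)
    have hxy : ‖x - y‖ = T - 1 := by
      have hxyeq : x - y = (1 - T⁻¹) • (x - x₀) := by
        rw [hy, sub_smul, one_smul]; abel
      rw [hxyeq, norm_smul, Real.norm_eq_abs, ← dist_eq_norm, ← hT,
        abs_of_pos (by rw [sub_pos]; exact inv_lt_one_of_one_lt₀ hT1)]
      field_simp
    have hbound : |u x - u x₀| ≤ T - δ := by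
      have : |u x - u x₀| ≤ |u x - u y| + |u y - u x₀| := by
        have := abs_sub_abs_le_abs_sub (u x - u x₀) (u y - u x₀)
        calc |u x - u x₀| = |(u x - u y) + (u y - u x₀)| := by ring_nf
          _ ≤ |u x - u y| + |u y - u x₀| := abs_add_le _ _
      have h1' : |u y - u x₀| ≤ m := by
        simpa [hyx₀] using h1
      have h2' : |u x - u y| ≤ T - 1 := by
        simpa [hxy] using h2
      calc |u x - u x₀| ≤ |u x - u y| + |u y - u x₀| := this
        _ ≤ (T - 1) + m := add_le_add h2' h1'
        _ = T - δ := by rw [hδ]; ring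
    have hsq : (u x - u x₀) ^ 2 ≤ (T - δ) ^ 2 := by
      have h := abs_le.mp hbound
      exact sq_le_sq' h.1 h.2
    have : δ < T ^ 2 - (u x - u x₀) ^ 2 := by nlinarith
    linarith [hx]
  exact (Metric.isBounded_closedBall).subset hsub
end
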